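/- Let K be any field and let R = K⟨x, y⟩/(x², y²). Set A = x + y and B = x + y + xy in R. Then: (1) A² is central in R; (2) B² = (1+x)A²(1+y); (3) B³ = (1+x)A³(1+x)(1+y); and consequently, for every k ≥ 1, B^{2k} = (1+x)A^{2k}(1+y)(1+x)⋯(1+y) and B^{2k+1} = (1+x)A^{2k+1}(1+y)(1+x)⋯(1+y), where the trailing factors alternate between (1+y) and (1+x), ending in (1+y), with 2k−1 (respectively 2k) such factors. -/
import Mathlib


/-- The generator `x` of the free associative algebra `K⟨x,y⟩`. -/
noncomputable def freeX (K : Type) [Field K] : FreeAlgebra K (Fin 2) :=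
  FreeAlgebra.ι K (0 : Fin 2)

/-- The generator `y` of the free associative algebra `K⟨x,y⟩`. -/
noncomputable def freeY (K : Type) [Field K] : FreeAlgebra K (Fin 2) :=
  FreeAlgebra.ι K (1 : Fin 2)

/-- The relation imposing `x² = 0` and `y² = 0`. -/
def sqRel (K : Type) [Field K] :
    FreeAlgebra K (Fin 2) → FreeAlgebra K (Fin 2) → Prop :=
  fun a b => b = 0 ∧ (a = freeX K ^ 2 ∨ a = freeY K ^ 2)

/-- The quotient `R = K⟨x,y⟩/(x², y²)`. -/
abbrev Rsq (K : Type) [Field K] : Type := RingQuot (sqRel K)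

/-- The image of `x` in `R`. -/
noncomputable def xR (K : Type) [Field K] : Rsq K :=
  RingQuot.mkAlgHom K (sqRel K) (freeX K)

/-- The image of `y` in `R`. -/
noncomputable def yR (K : Type) [Field K] : Rsq K :=
  RingQuot.mkAlgHom K (sqRel K) (freeY K)

/-- The alternating product of `m` trailing factors, read from the right:
the factor in position `p` (counting from the right, starting at `p = 1`)
is `(1+y)` if `p` is odd and `(1+x)` if `p` is even; so the product ends in `(1+y)`. -/
noncomputable def altProd (K : Type) [Field K] : ℕ → Rsq K
  | 0 => 1
  | m + 1 => (if (m + 1) % 2 = 1 then 1 + yR K else 1 + xR K) * altProd K m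


lemma hx2 (K : Type) [Field K] : xR K * xR K = 0 := by
  have h : RingQuot.mkAlgHom K (sqRel K) (freeX K ^ 2)
      = RingQuot.mkAlgHom K (sqRel K) 0 :=
    RingQuot.mkAlgHom_rel K ⟨rfl, Or.inl rfl⟩
  simpa [xR, pow_two, map_mul] using h

lemma hy2 (K : Type) [Field K] : yR K * yR K = 0 := by
  have h : RingQuot.mkAlgHom K (sqRel K) (freeY K ^ 2)
      = RingQuot.mkAlgHom K (sqRel K) 0 :=
    RingQuot.mkAlgHom_rel K ⟨rfl, Or.inr rfl⟩
  simpa [yR, pow_two, map_mul] using h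

lemma Asq_central (K : Type) [Field K] (r : Rsq K) :
    (xR K + yR K) ^ 2 * r = r * (xR K + yR K) ^ 2 := by
  obtain ⟨f, rfl⟩ := RingQuot.mkAlgHom_surjective K (sqRel K) r
  induction f using FreeAlgebra.induction with
  | grade0 s => simp [Algebra.commutes]
  | grade1 i =>
      have hx := hx2 K
      have hy := hy2 K
      fin_cases i
      · show (xR K + yR K) ^ 2 * xR K = xR K * (xR K + yR K) ^ 2
        simp only [pow_two, mul_add, add_mul, mul_assoc]
        simp [← mul_assoc, hx, hy]
      · show (xR K + yR K) ^ 2 * yR K = yR K * (xR K + yR K) ^ 2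
        simp only [pow_two, mul_add, add_mul, mul_assoc]
        simp [← mul_assoc, hx, hy]
  | mul a b ha hb =>
      rw [map_mul, ← mul_assoc, ha, mul_assoc, hb, mul_assoc]
  | add a b ha hb =>
      rw [map_add, mul_add, add_mul, ha, hb]

section
variable (K : Type) [Field K]

lemma hxl (t : Rsq K) : xR K * (xR K * t) = 0 := by
  rw [← mul_assoc, hx2, zero_mul]
lemma hyl (t : Rsq K) : yR K * (yR K * t) = 0 := by
  rw [← mul_assoc, hy2, zero_mul]

lemma hB2 : (xR K + yR K + xR K * yR K) ^ 2
    = (1 + xR K) * (xR K + yR K) ^ 2 * (1 + yR K) := by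
  simp only [pow_two, mul_add, add_mul, one_mul, mul_one, mul_assoc,
    hx2, hy2, hxl, hyl, mul_zero, zero_mul, add_zero, zero_add]

lemma hB3 : (xR K + yR K + xR K * yR K) ^ 3
    = (1 + xR K) * (xR K + yR K) ^ 3 * (1 + xR K) * (1 + yR K) := by
  simp only [pow_succ, pow_zero, one_mul, mul_add, add_mul, mul_one, mul_assoc,
    hx2, hy2, hxl, hyl, mul_zero, zero_mul, add_zero, zero_add]
  abel

lemma altProd_add_two (m : ℕ) :
    altProd K (m + 2) = altProd K m * ((1 + xR K) * (1 + yR K)) := by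
  induction m with
  | zero => simp [altProd, mul_assoc]
  | succ n ih =>
      have h : (n + 2 + 1) % 2 = (n + 1) % 2 := by omega
      show (if (n + 2 + 1) % 2 = 1 then 1 + yR K else 1 + xR K) * altProd K (n + 2) = _
      rw [h, ih, ← mul_assoc]
      rfl

lemma stepTwo (n : ℕ) (P : Rsq K)
    (h : (xR K + yR K + xR K * yR K) ^ n = (1 + xR K) * (xR K + yR K) ^ n * P) :
    (xR K + yR K + xR K * yR K) ^ (n + 2)
      = (1 + xR K) * (xR K + yR K) ^ (n + 2) * (P * ((1 + xR K) * (1 + yR K))) := by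
  have hB2' : (xR K + yR K + xR K * yR K) ^ 2
      = (xR K + yR K) ^ 2 * ((1 + xR K) * (1 + yR K)) := by
    rw [hB2, ← Asq_central, mul_assoc]
  rw [pow_add, h, hB2', pow_add]
  simp only [mul_assoc]
  rw [← mul_assoc P, ← Asq_central, mul_assoc]
end

/-- Let `K` be any field and `R = K⟨x,y⟩/(x², y²)`.  Set `A = x + y` and
`B = x + y + xy` in `R`.  Then: (1) `A²` is central in `R`; (2) `B² = (1+x)A²(1+y)`;
(3) `B³ = (1+x)A³(1+x)(1+y)`; and consequently, for every `k ≥ 1`,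
`B^{2k} = (1+x)A^{2k}(1+y)(1+x)⋯(1+y)` and `B^{2k+1} = (1+x)A^{2k+1}(1+y)(1+x)⋯(1+y)`,
where the trailing factors alternate between `(1+y)` and `(1+x)`, ending in `(1+y)`, with
`2k−1` (respectively `2k`) such factors. -/
theorem statement16 (K : Type) [Field K] :
    letI A : Rsq K := xR K + yR K
    letI B : Rsq K := xR K + yR K + xR K * yR K
    (∀ r : Rsq K, A ^ 2 * r = r * A ^ 2) ∧
    (B ^ 2 = (1 + xR K) * A ^ 2 * (1 + yR K)) ∧
    (B ^ 3 = (1 + xR K) * A ^ 3 * (1 + xR K) * (1 + yR K)) ∧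
    (∀ k : ℕ, 1 ≤ k →
      B ^ (2 * k) = (1 + xR K) * A ^ (2 * k) * altProd K (2 * k - 1) ∧
      B ^ (2 * k + 1) = (1 + xR K) * A ^ (2 * k + 1) * altProd K (2 * k)) := by
  refine ⟨Asq_central K, hB2 K, hB3 K, ?_⟩
  intro k hk
  induction k, hk using Nat.le_induction with
  | base =>
      constructor
      · show (xR K + yR K + xR K * yR K) ^ 2 = _
        rw [hB2]
        norm_num [altProd, mul_assoc]
      · show (xR K + yR K + xR K * yR K) ^ 3 = _
        rw [hB3]
        norm_num [altProd, mul_assoc]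
  | succ n hn ih =>
      have h1 := stepTwo K (2 * n) (altProd K (2 * n - 1)) ih.1
      have h2 := stepTwo K (2 * n + 1) (altProd K (2 * n)) ih.2
      have e1 : 2 * n + 2 = 2 * (n + 1) := by omega
      have e2 : 2 * n - 1 + 2 = 2 * (n + 1) - 1 := by omega
      have a1 : altProd K (2 * n - 1) * ((1 + xR K) * (1 + yR K))
          = altProd K (2 * (n + 1) - 1) := by
        rw [← altProd_add_two, e2]
      have a2 : altProd K (2 * n) * ((1 + xR K) * (1 + yR K))
          = altProd K (2 * (n + 1)) := by
        rw [← altProd_add_two]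
        ring_nf
      constructor
      · rw [← e1, h1, a1]
        congr 2
      · have e3 : 2 * (n + 1) + 1 = 2 * n + 1 + 2 := by omega
        rw [e3, h2, a2]
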